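/- Let p be a prime and κ ≥ 2. If χ is a primitive Dirichlet character modulo p^κ and α is an integer with 1 ≤ α ≤ κ/2 (more precisely κ - α ≥ κ/2 so that (p^{κ-α})^2 ≡ 0 mod p^κ), then the map z ↦ χ(1 + z·p^{κ-α}) is a well-defined additive character of Z/p^α Z; consequently there exists an integer η with gcd(η, p) = 1 such that χ(1 + z·p^{κ-α}) = e^{2πi η z / p^α} for all integers z. -/

import Mathlib

open Complex

/-- For a primitive Dirichlet character `χ` mod `p^κ` and `1 ≤ α` with
`2α ≤ κ` (so that `κ - α ≥ κ/2`), the map `z ↦ χ(1 + z p^(κ-α))` is an additive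
character of `ℤ/p^α ℤ`, and there is an integer `η` coprime to `p` with
`χ(1 + z p^(κ-α)) = e^{2πi η z / p^α}` for all integers `z`. -/
theorem stmt0 (p κ α : ℕ) (hp : p.Prime) (hκ : 2 ≤ κ) (hα1 : 1 ≤ α) (hα2 : 2 * α ≤ κ)
    (χ : DirichletCharacter ℂ (p ^ κ)) (hχ : χ.IsPrimitive) :
    (∀ z1 z2 : ℤ,
        χ (((1 + (z1 + z2) * (p : ℤ) ^ (κ - α) : ℤ) : ZMod (p ^ κ)))
          = χ (((1 + z1 * (p : ℤ) ^ (κ - α) : ℤ) : ZMod (p ^ κ)))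
              * χ (((1 + z2 * (p : ℤ) ^ (κ - α) : ℤ) : ZMod (p ^ κ)))) ∧
    ∃ η : ℤ, IsCoprime η (p : ℤ) ∧
      ∀ z : ℤ,
        χ (((1 + z * (p : ℤ) ^ (κ - α) : ℤ) : ZMod (p ^ κ)))
          = Complex.exp (2 * Real.pi * Complex.I * η * z / (p : ℂ) ^ α) := by
  haveI : NeZero (p ^ κ) := ⟨pow_ne_zero _ hp.pos.ne'⟩
  haveI : NeZero (p ^ α) := ⟨pow_ne_zero _ hp.pos.ne'⟩
  have hακ : α ≤ κ := le_trans (by omega) hα2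
  set q : ℤ := (p : ℤ) ^ (κ - α) with hq
  -- q² ≡ 0 mod p^κ
  have hq2 : ((q * q : ℤ) : ZMod (p ^ κ)) = 0 := by
    rw [ZMod.intCast_zmod_eq_zero_iff_dvd, hq, ← pow_add]
    exact_mod_cast (pow_dvd_pow (p : ℤ) (by omega) : ((p : ℤ) ^ κ ∣ _))
  -- multiplicativity in ZMod (p ^ κ)
  have key : ∀ z1 z2 : ℤ,
      (((1 + z1 * q : ℤ) : ZMod (p ^ κ))) * (((1 + z2 * q : ℤ) : ZMod (p ^ κ)))
        = (((1 + (z1 + z2) * q : ℤ) : ZMod (p ^ κ))) := by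
    intro z1 z2
    have h : ((1 + z1 * q) * (1 + z2 * q) : ℤ) = (1 + (z1 + z2) * q) + (z1 * z2) * (q * q) := by
      ring
    calc (((1 + z1 * q : ℤ) : ZMod (p ^ κ))) * (((1 + z2 * q : ℤ) : ZMod (p ^ κ)))
        = (((1 + (z1 + z2) * q : ℤ) : ZMod (p ^ κ)))
            + ((z1 * z2 : ℤ) : ZMod (p ^ κ)) * ((q * q : ℤ) : ZMod (p ^ κ)) := by
          rw [← Int.cast_mul, h]; push_cast; ring
      _ = (((1 + (z1 + z2) * q : ℤ) : ZMod (p ^ κ))) := by rw [hq2]; ring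
  set g : ℤ → ℂ := fun z => χ (((1 + z * q : ℤ) : ZMod (p ^ κ))) with hgdef
  have hgadd : ∀ z1 z2 : ℤ, g (z1 + z2) = g z1 * g z2 := by
    intro z1 z2
    simp only [hgdef]
    rw [← key, map_mul]
  refine ⟨fun z1 z2 => hgadd z1 z2, ?_⟩
  have hg0 : g 0 = 1 := by
    simp only [hgdef, zero_mul, add_zero]
    norm_num
  have hg1inv : g 1 * g (-1) = 1 := by rw [← hgadd]; norm_num [hg0]
  have hg1ne : g 1 ≠ 0 := left_ne_zero_of_mul_eq_one hg1inv
  have hnat : ∀ n : ℕ, g n = g 1 ^ n := by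
    intro n
    induction n with
    | zero => simpa using hg0
    | succ n ih =>
        have h := hgadd n 1
        push_cast at h ⊢
        rw [h, ih, pow_succ]
  have hzpow : ∀ z : ℤ, g z = g 1 ^ z := by
    intro z
    cases z with
    | ofNat n => simpa using hnat n
    | negSucc n =>
        have h1 : g (Int.negSucc n) * g ((n + 1 : ℕ) : ℤ) = 1 := by
          rw [← hgadd]
          have : Int.negSucc n + ((n + 1 : ℕ) : ℤ) = 0 := by
            rw [Int.negSucc_eq]; push_cast; ring
          rw [this, hg0]
        have h2 : g ((n + 1 : ℕ) : ℤ) = g 1 ^ (n + 1) := hnat (n + 1)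
        rw [zpow_negSucc]
        rw [h2] at h1
        field_simp at h1 ⊢
        linear_combination h1
  -- g 1 is a p^α-th root of unity
  have hroot : g 1 ^ (p ^ α) = 1 := by
    rw [← hnat (p ^ α)]
    simp only [hgdef]
    have hcast : ((1 + ((p ^ α : ℕ) : ℤ) * q : ℤ) : ZMod (p ^ κ)) = 1 := by
      have h1 : (((p ^ α : ℕ) : ℤ) * q : ℤ) = (p : ℤ) ^ κ := by
        rw [hq]; push_cast; rw [← pow_add]; congr 1; omega
      have h2 : (((p : ℤ) ^ κ : ℤ) : ZMod (p ^ κ)) = 0 := by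
        rw [ZMod.intCast_zmod_eq_zero_iff_dvd]; exact_mod_cast dvd_refl ((p : ℤ) ^ κ)
      rw [h1, Int.cast_add, Int.cast_one, h2, add_zero]
    rw [hcast, map_one]
  obtain ⟨i, hil, hζ⟩ :=
    (Complex.isPrimitiveRoot_exp (p ^ α) (NeZero.ne _)).eq_pow_of_pow_eq_one hroot
  have hg1 : g 1 = Complex.exp ((i : ℂ) * (2 * Real.pi * Complex.I / ((p : ℂ) ^ α))) := by
    rw [← hζ, ← Complex.exp_nat_mul]
    push_cast
    ring_nf
  have hgz : ∀ z : ℤ, g z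
      = Complex.exp (2 * Real.pi * Complex.I * (i : ℂ) * z / (p : ℂ) ^ α) := by
    intro z
    rw [hzpow z, hg1, ← Complex.exp_int_mul]
    congr 1
    ring
  -- triviality of χ on 1 + t p^(κ-1) would contradict primitivity; hence p ∤ i
  have hnd : ¬ (p : ℤ) ∣ (i : ℤ) := by
    rintro ⟨m, hm⟩
    have hptriv : ∀ t : ℤ, χ (((1 + t * (p : ℤ) ^ (κ - 1) : ℤ) : ZMod (p ^ κ))) = 1 := by
      intro t
      have h1 : (1 + (t * (p : ℤ) ^ (α - 1)) * q : ℤ) = 1 + t * (p : ℤ) ^ (κ - 1) := by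
        have he : (α - 1) + (κ - α) = κ - 1 := by omega
        rw [hq, mul_assoc, ← pow_add, he]
      have h2 := hgz (t * (p : ℤ) ^ (α - 1))
      simp only [hgdef] at h2
      rw [h1] at h2
      rw [h2]
      have hpαne : ((p : ℂ)) ^ α ≠ 0 := pow_ne_zero _ (by exact_mod_cast hp.pos.ne')
      have hpα : (p : ℂ) ^ α = (p : ℂ) * (p : ℂ) ^ (α - 1) := by
        rw [← pow_succ']; congr 1; omega
      have harg : 2 * (Real.pi : ℂ) * Complex.I * (i : ℂ) * ((t * (p : ℤ) ^ (α - 1) : ℤ) : ℂ)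
          / (p : ℂ) ^ α = ((m * t : ℤ) : ℂ) * (2 * Real.pi * Complex.I) := by
        have hmi : ((i : ℤ) : ℂ) = (p : ℂ) * ((m : ℤ) : ℂ) := by exact_mod_cast congrArg Int.cast hm
        push_cast at hmi ⊢
        rw [hmi, hpα]
        have hpne : (p : ℂ) ≠ 0 := by exact_mod_cast hp.pos.ne'
        have hpα1ne : ((p : ℂ)) ^ (α - 1) ≠ 0 := pow_ne_zero _ hpne
        field_simp
      rw [harg]
      exact_mod_cast Complex.exp_int_mul_two_pi_mul_I (m * t)
    -- χ factors through p^(κ-1)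
    have hd : p ^ (κ - 1) ∣ p ^ κ := pow_dvd_pow p (by omega)
    have hFT : χ.FactorsThrough (p ^ (κ - 1)) := by
      rw [DirichletCharacter.factorsThrough_iff_ker_unitsMap hd]
      intro u hu
      rw [MonoidHom.mem_ker] at hu ⊢
      have hu' : (((u : ZMod (p ^ κ)).val : ℕ) : ZMod (p ^ (κ - 1))) = 1 := by
        have := congrArg (Units.val) hu
        rw [ZMod.unitsMap_def] at this
        simpa [ZMod.castHom_apply, ← ZMod.natCast_val] using this
      have hdvd : ((p ^ (κ - 1) : ℕ) : ℤ) ∣ (((u : ZMod (p ^ κ)).val : ℤ) - 1) := by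
        rw [← ZMod.intCast_zmod_eq_zero_iff_dvd]
        push_cast
        rw [hu', sub_self]
      obtain ⟨t, ht⟩ := hdvd
      have hval : ((u : ZMod (p ^ κ)).val : ℤ) = 1 + t * (p : ℤ) ^ (κ - 1) := by
        push_cast at ht
        linarith [ht]
      have hcoe : ((u : ZMod (p ^ κ))) = (((1 + t * (p : ℤ) ^ (κ - 1) : ℤ)) : ZMod (p ^ κ)) := by
        rw [← hval]
        push_cast
        rw [ZMod.natCast_val, ZMod.cast_id]
      ext
      rw [MulChar.coe_toUnitHom, hcoe, hptriv t, Units.val_one]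
    have hle : χ.conductor ≤ p ^ (κ - 1) := Nat.sInf_le hFT
    rw [hχ] at hle
    have : p ^ (κ - 1) < p ^ κ := Nat.pow_lt_pow_right hp.one_lt (by omega)
    omega
  refine ⟨(i : ℤ), ?_, fun z => by simpa only [hgdef, Int.cast_natCast] using hgz z⟩
  exact ((Int.prime_iff_natAbs_prime.mpr (by simpa using hp)).irreducible.coprime_iff_not_dvd.mpr
    hnd).symm
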